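/- Fix α, β ∈ (0,1) with α ≠ β and let ε ∈ (0, 1 − 1/K). Set r = min{ α(1−β)/(β(1−α)), β(1−α)/(α(1−β)) } and η* = log((1/ε − 1)(K−1)) / max{γ₁, γ₂}. Then for W* = −η*·∇_W 𝓛(W₀) one has min_{k∈[K]} [f_{W*}(E_k)]_k ≤ (1−ε)^r ε^{−r} (K−1)^{r−1}. -/

import Mathlib

noncomputable section

open Matrix

attribute [local instance] Matrix.normedAddCommGroup Matrix.normedSpace

/-- Softmax probability that query `k` (key embedding = `k`-th column of `Ee`) is mapped
to object `k'` (`k'`-th column of `Et`):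
`[f_W(E_k)]_{k'} = exp(Ẽ_{k'}ᵀ W E_k) / ∑_{k''} exp(Ẽ_{k''}ᵀ W E_k)`. -/
def prob {K : ℕ} (Et Ee W : Matrix (Fin K) (Fin K) ℝ) (k' k : Fin K) : ℝ :=
  Real.exp ((Etᵀ * W * Ee) k' k) / ∑ k'' : Fin K, Real.exp ((Etᵀ * W * Ee) k'' k)

/-- Class frequencies: `p_k = α/L` for the first `L` classes, `p_k = (1-α)/(K-L)` for the rest. -/
def pclass (K L : ℕ) (α : ℝ) (k : Fin K) : ℝ :=
  if (k : ℕ) < L then α / L else (1 - α) / ((K : ℝ) - L)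

/-- Population cross-entropy loss `𝓛(W) = -∑_k p_k log [f_W(E_k)]_k`. -/
def ploss {K : ℕ} (L : ℕ) (α : ℝ) (Et Ee W : Matrix (Fin K) (Fin K) ℝ) : ℝ :=
  -∑ k : Fin K, pclass K L α k * Real.log (prob Et Ee W k k)

/-- `G` is the Fréchet gradient of `f` at `W` with respect to the Frobenius
inner product: `f` is differentiable at `W` with differential `H ↦ trace(Gᵀ H)`. -/
def IsGradientAt {K : ℕ} (f : Matrix (Fin K) (Fin K) ℝ → ℝ)
    (G W : Matrix (Fin K) (Fin K) ℝ) : Prop :=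
  ∃ l : Matrix (Fin K) (Fin K) ℝ →L[ℝ] ℝ, HasFDerivAt f l W ∧ ∀ H, l H = (Gᵀ * H).trace

/-- `(U, d, V)` is a singular value decomposition of `G`: `U`, `V` orthogonal,
`d` nonnegative, and `G = U · diagonal d · Vᵀ`. -/
def IsSVD {K : ℕ} (G U : Matrix (Fin K) (Fin K) ℝ) (d : Fin K → ℝ)
    (V : Matrix (Fin K) (Fin K) ℝ) : Prop :=
  Uᵀ * U = 1 ∧ U * Uᵀ = 1 ∧ Vᵀ * V = 1 ∧ V * Vᵀ = 1 ∧ (∀ i, 0 ≤ d i) ∧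
    G = U * Matrix.diagonal d * Vᵀ

/-- `U · norm(Σ) · Vᵀ`, where `norm(Σ)` replaces every nonzero diagonal entry of
`Σ = diagonal d` by `1`. -/
def muonOf {K : ℕ} (U : Matrix (Fin K) (Fin K) ℝ) (d : Fin K → ℝ)
    (V : Matrix (Fin K) (Fin K) ℝ) : Matrix (Fin K) (Fin K) ℝ :=
  U * Matrix.diagonal (fun i => if d i = 0 then (0 : ℝ) else 1) * Vᵀ


lemma grad_eval {K : ℕ} (hK : 2 ≤ K) (Et Ee : Matrix (Fin K) (Fin K) ℝ)
    (hEe : Eeᵀ * Ee = 1) (hEt : Etᵀ * Et = 1) (L : ℕ) (α : ℝ)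
    (G : Matrix (Fin K) (Fin K) ℝ) (hG : IsGradientAt (ploss L α Et Ee) G 0) :
    ∀ i j : Fin K, (Etᵀ * G * Ee) i j
      = pclass K L α j * ((K : ℝ)⁻¹ - if i = j then 1 else 0) := by
  haveI : NeZero K := ⟨by omega⟩
  -- the entrywise linear functionals
  let e : Fin K → Fin K → (Matrix (Fin K) (Fin K) ℝ →L[ℝ] ℝ) := fun i j =>
    LinearMap.toContinuousLinearMap
      { toFun := fun W => (Etᵀ * W * Ee) i j
        map_add' := by intro x y; simp [Matrix.mul_add, Matrix.add_mul]
        map_smul' := by intro c x; simp [Matrix.mul_smul, Matrix.smul_mul] }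
  have he_app : ∀ i j H, e i j H = (Etᵀ * H * Ee) i j := fun _ _ _ => rfl
  have he : ∀ i j : Fin K, HasFDerivAt (fun W => (Etᵀ * W * Ee) i j) (e i j) 0 :=
    fun i j => (e i j).hasFDerivAt
  have hsum0 : ∀ k : Fin K, (∑ k'' : Fin K, Real.exp ((Etᵀ * (0:Matrix (Fin K) (Fin K) ℝ) * Ee) k'' k)) = (K : ℝ) := by
    intro k; simp
  have hk : ∀ k : Fin K, HasFDerivAt
      (fun W => Real.log (∑ k'' : Fin K, Real.exp ((Etᵀ * W * Ee) k'' k)) - (Etᵀ * W * Ee) k k)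
      ((K : ℝ)⁻¹ • (∑ k'' : Fin K, e k'' k) - e k k) 0 := by
    intro k
    have h1 : ∀ k'' : Fin K, HasFDerivAt (fun W => Real.exp ((Etᵀ * W * Ee) k'' k)) (e k'' k) 0 := by
      intro k''
      have := (he k'' k).exp
      have h0 : Real.exp ((Etᵀ * (0:Matrix (Fin K) (Fin K) ℝ) * Ee) k'' k) = 1 := by simp
      rw [h0] at this
      exact this.congr_fderiv (by ext H; exact one_mul _)
    have h2 : HasFDerivAt (fun W => ∑ k'' : Fin K, Real.exp ((Etᵀ * W * Ee) k'' k))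
        (∑ k'' : Fin K, e k'' k) 0 := HasFDerivAt.fun_sum (fun k'' _ => h1 k'')
    have h3 := h2.log (by simp [hsum0 k]; positivity)
    have h4 := h3.fun_sub (he k k)
    rw [hsum0 k] at h4
    exact h4
  have hplossF : ploss L α Et Ee = fun W => ∑ k : Fin K, pclass K L α k *
      (Real.log (∑ k'' : Fin K, Real.exp ((Etᵀ * W * Ee) k'' k)) - (Etᵀ * W * Ee) k k) := by
    funext W
    unfold ploss prob
    rw [← Finset.sum_neg_distrib]
    refine Finset.sum_congr rfl fun k _ => ?_
    have hS : (0:ℝ) < ∑ k'' : Fin K, Real.exp ((Etᵀ * W * Ee) k'' k) :=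
      Finset.sum_pos (fun _ _ => Real.exp_pos _) Finset.univ_nonempty
    rw [Real.log_div (Real.exp_ne_zero _) (ne_of_gt hS), Real.log_exp]
    ring
  have hF : HasFDerivAt (ploss L α Et Ee)
      (∑ k : Fin K, pclass K L α k • ((K : ℝ)⁻¹ • (∑ k'' : Fin K, e k'' k) - e k k)) 0 := by
    rw [hplossF]
    exact HasFDerivAt.fun_sum fun k _ => (hk k).const_mul _
  obtain ⟨l, hl, hlG⟩ := hG
  have hlu : l = ∑ k : Fin K, pclass K L α k • ((K : ℝ)⁻¹ • (∑ k'' : Fin K, e k'' k) - e k k) :=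
    hl.unique hF
  intro i j
  have h5 := hlG (Et * Matrix.single i j 1 * Eeᵀ)
  rw [hlu] at h5
  have key : ∀ N : Matrix (Fin K) (Fin K) ℝ,
      (Matrix.single i j (1:ℝ) * N).trace = N j i := by
    intro N
    rw [Matrix.trace, Finset.sum_eq_single i]
    · simp [Matrix.diag]
    · intro b _ hb
      simp [Matrix.diag, Matrix.single_mul_apply_of_ne _ _ _ _ _ hb]
    · simp
  have htr : (Gᵀ * (Et * Matrix.single i j 1 * Eeᵀ)).trace = (Etᵀ * G * Ee) i j := by
    have h6 : Gᵀ * (Et * Matrix.single i j 1 * Eeᵀ)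
        = Gᵀ * Et * Matrix.single i j 1 * Eeᵀ := by
      simp [Matrix.mul_assoc]
    rw [h6, Matrix.trace_mul_cycle, Matrix.trace_mul_comm, key]
    simp only [Matrix.mul_apply, Matrix.transpose_apply, Finset.sum_mul, Finset.mul_sum]
    refine Finset.sum_congr rfl fun a _ => Finset.sum_congr rfl fun b _ => by ring
  have hSred : Etᵀ * (Et * Matrix.single i j 1 * Eeᵀ) * Ee = Matrix.single i j 1 := by
    simp only [Matrix.mul_assoc]
    rw [hEe, Matrix.mul_one, ← Matrix.mul_assoc, hEt, Matrix.one_mul]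
  have hrhs : (∑ k : Fin K, pclass K L α k • ((K : ℝ)⁻¹ • (∑ k'' : Fin K, e k'' k) - e k k))
      (Et * Matrix.single i j 1 * Eeᵀ)
      = pclass K L α j * ((K : ℝ)⁻¹ - if i = j then 1 else 0) := by
    simp only [ContinuousLinearMap.coe_sum', Finset.sum_apply, ContinuousLinearMap.coe_smul',
      Pi.smul_apply, ContinuousLinearMap.coe_sub', Pi.sub_apply, he_app, hSred, smul_eq_mul]
    have hs1 : ∀ x : Fin K, (∑ x1 : Fin K, Matrix.single i j (1:ℝ) x1 x)
        = if x = j then 1 else 0 := by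
      intro x
      by_cases hx : x = j
      · subst hx
        simp [Matrix.single, Finset.sum_ite_eq]
      · have h0 : ∀ x1 : Fin K, Matrix.single i j (1:ℝ) x1 x = 0 := fun x1 =>
          Matrix.single_apply_of_ne _ _ _ _ _ (by tauto)
        simp [h0, hx]
    calc (∑ x : Fin K, pclass K L α x *
            ((↑K)⁻¹ * ∑ x1 : Fin K, Matrix.single i j (1:ℝ) x1 x
              - Matrix.single i j (1:ℝ) x x))
        = ∑ x : Fin K, (if x = j then
            pclass K L α j * ((↑K)⁻¹ - if i = j then 1 else 0) else 0) := by
          refine Finset.sum_congr rfl fun x _ => ?_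
          rw [hs1 x]
          by_cases hx : x = j
          · subst hx
            by_cases hij : i = x
            · subst hij; simp [Matrix.single]
            · simp [Matrix.single, hij]
          · have h0 : Matrix.single i j (1:ℝ) x x = 0 :=
              Matrix.single_apply_of_ne _ _ _ _ _ (by tauto)
            simp [hx, h0]
      _ = pclass K L α j * ((↑K)⁻¹ - if i = j then 1 else 0) := by simp
  rw [htr, hrhs] at h5
  exact h5.symm

/-- One-step gradient descent with the critical step size `η*`: the worst-learned class
probability is at most `(1-ε)^r ε^{-r} (K-1)^{r-1}`. -/
theorem stmt1 {K : ℕ} (hK : 2 ≤ K) (Et Ee : Matrix (Fin K) (Fin K) ℝ)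
    (hEe : Eeᵀ * Ee = 1) (hEt : Etᵀ * Et = 1)
    (α β : ℝ) (hα : α ∈ Set.Ioo (0:ℝ) 1) (hβ : β ∈ Set.Ioo (0:ℝ) 1) (hαβ : α ≠ β)
    (L : ℕ) (hLβ : (L : ℝ) = β * K) (hL1 : 1 ≤ L) (hLK : L ≤ K - 1)
    (ε : ℝ) (hε : ε ∈ Set.Ioo (0:ℝ) (1 - 1 / K))
    (γ₁ γ₂ r ηstar : ℝ)
    (hγ₁ : γ₁ = α / L) (hγ₂ : γ₂ = (1 - α) / ((K : ℝ) - L))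
    (hr : r = min (α * (1 - β) / (β * (1 - α))) (β * (1 - α) / (α * (1 - β))))
    (hη : ηstar = Real.log ((1 / ε - 1) * ((K : ℝ) - 1)) / max γ₁ γ₂)
    (G : Matrix (Fin K) (Fin K) ℝ) (hG : IsGradientAt (ploss L α Et Ee) G 0)
    (Wstar : Matrix (Fin K) (Fin K) ℝ) (hW : Wstar = -ηstar • G) :
    Finset.univ.inf' ⟨⟨0, by omega⟩, Finset.mem_univ _⟩
        (fun k : Fin K => prob Et Ee Wstar k k)
      ≤ (1 - ε) ^ r * ε ^ (-r) * ((K : ℝ) - 1) ^ (r - 1) := by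
  obtain ⟨hα0, hα1⟩ := hα
  obtain ⟨hβ0, hβ1⟩ := hβ
  obtain ⟨hε0, hεK⟩ := hε
  have hK0 : (0:ℝ) < K := by positivity
  have hK1 : (1:ℝ) < K := by exact_mod_cast hK.trans_lt' one_lt_two
  have hKm1 : (0:ℝ) < (K:ℝ) - 1 := by linarith
  have hL0 : (0:ℝ) < L := by exact_mod_cast hL1
  have hLltK : L + 1 ≤ K := by omega
  have hKL : (0:ℝ) < (K:ℝ) - L := by
    have : (L:ℝ) + 1 ≤ K := by exact_mod_cast hLltK
    linarith
  have hγ₁0 : 0 < γ₁ := by rw [hγ₁]; positivity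
  have hγ₂0 : 0 < γ₂ := by rw [hγ₂]; have : (0:ℝ) < 1 - α := by linarith
                           positivity
  have hε1 : ε < 1 := by
    have : (0:ℝ) < 1 / K := by positivity
    linarith
  set T : ℝ := (1 / ε - 1) * ((K : ℝ) - 1) with hT
  have hT0 : 0 < T := by
    have h1 : (0:ℝ) < 1 / ε - 1 := by
      have : 1 < 1 / ε := by rw [lt_div_iff₀ hε0]; linarith
      linarith
    positivity
  -- r = min γ / max γ
  have hKLr : (K:ℝ) - L = (1 - β) * K := by rw [hLβ]; ring
  have e1 : γ₁ / γ₂ = α * (1 - β) / (β * (1 - α)) := by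
    rw [hγ₁, hγ₂, hKLr, hLβ]
    have h1 : (0:ℝ) < 1 - α := by linarith
    have h2 : (0:ℝ) < 1 - β := by linarith
    field_simp
  have e2 : γ₂ / γ₁ = β * (1 - α) / (α * (1 - β)) := by
    rw [hγ₁, hγ₂, hKLr, hLβ]
    have h1 : (0:ℝ) < 1 - α := by linarith
    have h2 : (0:ℝ) < 1 - β := by linarith
    field_simp
  have hrm : r = min γ₁ γ₂ / max γ₁ γ₂ := by
    rw [hr, ← e1, ← e2]
    rcases le_total γ₁ γ₂ with h | h
    · rw [min_eq_left h, max_eq_right h]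
      exact min_eq_left ((div_le_one hγ₂0).mpr h |>.trans ((one_le_div hγ₁0).mpr h))
    · rw [min_eq_right h, max_eq_left h]
      exact min_eq_right ((div_le_one hγ₁0).mpr h |>.trans ((one_le_div hγ₂0).mpr h))
  have hmax0 : 0 < max γ₁ γ₂ := lt_max_of_lt_left hγ₁0
  -- the worst index
  obtain ⟨k₀, hpk₀⟩ : ∃ k₀ : Fin K, pclass K L α k₀ = min γ₁ γ₂ := by
    rcases le_total γ₁ γ₂ with h | h
    · refine ⟨⟨0, by omega⟩, ?_⟩
      rw [min_eq_left h, hγ₁]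
      simp [pclass, show 0 < L by omega]
    · refine ⟨⟨K - 1, by omega⟩, ?_⟩
      rw [min_eq_right h, hγ₂]
      have : ¬ (K - 1 < L) := by omega
      simp [pclass, this]
  have hc : ηstar * pclass K L α k₀ = Real.log T * r := by
    rw [hpk₀, hη, hrm]
    field_simp
  -- entries of the logit matrix
  have hgrad := grad_eval hK Et Ee hEe hEt L α G hG
  have hB : ∀ i j' : Fin K, (Etᵀ * Wstar * Ee) i j'
      = -ηstar * (pclass K L α j' * ((K:ℝ)⁻¹ - if i = j' then 1 else 0)) := by
    intro i j'
    rw [hW]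
    have h7 : Etᵀ * (-ηstar • G) * Ee = -ηstar • (Etᵀ * G * Ee) := by
      rw [Matrix.mul_smul, Matrix.smul_mul]
    rw [h7, Matrix.smul_apply, hgrad i j', smul_eq_mul]
  -- probability bound at k₀
  set p : ℝ := pclass K L α k₀ with hp
  have hden : (∑ k'' : Fin K, Real.exp ((Etᵀ * Wstar * Ee) k'' k₀))
      = Real.exp (-ηstar * (p * ((K:ℝ)⁻¹ - 1)))
        + ((K:ℝ) - 1) * Real.exp (-ηstar * (p * (K:ℝ)⁻¹)) := by
    rw [← Finset.add_sum_erase _ _ (Finset.mem_univ k₀)]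
    congr 1
    · rw [hB k₀ k₀, if_pos rfl, ← hp]
    · rw [Finset.sum_congr rfl (fun x hx => by
        rw [hB x k₀, if_neg (Finset.ne_of_mem_erase hx), ← hp, sub_zero])]
      rw [Finset.sum_const, Finset.card_erase_of_mem (Finset.mem_univ k₀),
        Finset.card_univ, Fintype.card_fin, nsmul_eq_mul]
      congr 1
      exact_mod_cast Nat.cast_sub (by omega)
  have hprobk : prob Et Ee Wstar k₀ k₀ ≤ T ^ r / ((K:ℝ) - 1) := by
    unfold prob
    rw [hden, hB k₀ k₀, if_pos rfl]
    set a : ℝ := -ηstar * (p * ((K:ℝ)⁻¹ - 1)) with ha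
    set b : ℝ := -ηstar * (p * (K:ℝ)⁻¹) with hb
    have hstep1 : Real.exp a / (Real.exp a + ((K:ℝ) - 1) * Real.exp b)
        ≤ Real.exp a / (((K:ℝ) - 1) * Real.exp b) := by
      apply div_le_div_of_nonneg_left (Real.exp_pos a).le (by positivity)
      nlinarith [Real.exp_pos a, Real.exp_pos b]
    have hstep2 : Real.exp a / (((K:ℝ) - 1) * Real.exp b) = Real.exp (a - b) / ((K:ℝ) - 1) := by
      rw [Real.exp_sub]
      field_simp
    have hab : a - b = ηstar * p := by rw [ha, hb]; ring
    have hexp : Real.exp (a - b) = T ^ r := by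
      rw [hab, hc, Real.rpow_def_of_pos hT0]
    calc Real.exp a / (Real.exp a + ((K:ℝ) - 1) * Real.exp b)
        ≤ Real.exp a / (((K:ℝ) - 1) * Real.exp b) := hstep1
      _ = Real.exp (a - b) / ((K:ℝ) - 1) := hstep2
      _ = T ^ r / ((K:ℝ) - 1) := by rw [hexp]
  -- the RHS equals T^r / (K-1)
  have hRHS : (1 - ε) ^ r * ε ^ (-r) * ((K : ℝ) - 1) ^ (r - 1) = T ^ r / ((K:ℝ) - 1) := by
    have h1ε : (0:ℝ) < 1 - ε := by linarith
    have hTeq : T = ((1 - ε) / ε) * ((K:ℝ) - 1) := by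
      rw [hT]
      congr 1
      field_simp
    have h2 : T ^ r = (1 - ε) ^ r * (ε ^ r)⁻¹ * ((K:ℝ) - 1) ^ r := by
      rw [hTeq, Real.mul_rpow (by positivity) hKm1.le, Real.div_rpow h1ε.le hε0.le,
        div_eq_mul_inv]
    have h3 : ((K:ℝ) - 1) ^ (r - 1) = ((K:ℝ) - 1) ^ r / ((K:ℝ) - 1) := by
      rw [Real.rpow_sub hKm1, Real.rpow_one]
    rw [h2, h3, Real.rpow_neg hε0.le]
    ring
  rw [← hRHS] at hprobk
  exact le_trans (Finset.inf'_le _ (Finset.mem_univ k₀)) hprobk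

end
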